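/- Let Ω be a type of datasets with a symmetric neighboring relation, let m ≥ 1 and ε > 0, and for each i = 1,…,m let O_i be a measurable space and let M_i be a measurable mechanism taking a dataset X ∈ Ω together with previous outcomes (o_1,…,o_{i−1}) ∈ O_1×…×O_{i−1} and returning a probability measure on O_i, such that for every i and every fixed (o_1,…,o_{i−1}), the mechanism X ↦ M_i(X; o_1,…,o_{i−1}) is ε-DP (i.e., (ε,0)-DP). Then for every δ' > 0, the composed mechanism mapping X to the joint distribution of (o_1,…,o_m), where o_i is drawn from M_i(X; o_1,…,o_{i−1}) sequentially, is (ε', δ')-DP with ε' = √(2·m·log(1/δ'))·ε + m·ε·(e^ε − 1). -/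

import Mathlib

open MeasureTheory

/-- `(ε, δ)`-differential privacy of a mechanism `M : Ω → Measure α` with respect to a
neighboring relation `N`. -/
def IsDP {Ω : Type} {α : Type*} [MeasurableSpace α] (N : Ω → Ω → Prop)
    (M : Ω → Measure α) (ε δ : ℝ) : Prop :=
  ∀ X X', N X X' → ∀ S : Set α, MeasurableSet S →
    M X S ≤ ENNReal.ofReal (Real.exp ε) * M X' S + ENNReal.ofReal δ

/-- The sequential (adaptive) composition of the mechanisms
`M i : ((j : Fin i) → O j) → Measure (O i)`: the joint distribution of `(o_0, …, o_{m-1})`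
where `o_i` is drawn from `M i (o_0, …, o_{i-1})` sequentially. -/
noncomputable def seqCompose (O : ℕ → Type) [∀ i, MeasurableSpace (O i)]
    (M : (i : ℕ) → ((j : Fin i) → O j) → Measure (O i)) :
    (m : ℕ) → Measure ((j : Fin m) → O j)
  | 0 => Measure.dirac (fun j => j.elim0)
  | m + 1 => (seqCompose O M m).bind fun o => (M m o).map (fun x => Fin.snoc o x)

open scoped ENNReal

/-!
Fix neighbouring datasets `X`, `X'` and write `E = e^ε`. For every history, the pair of
ε-indistinguishable step distributions `(μ, ν)` is obtained (Kairouz–Oh–Viswanath) from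
randomized response, which outputs `false` with probability `E/(E+1)` under `X` and `1/(E+1)`
under `X'`, followed by one common channel to the distributions `dpSplit E μ ν` and
`dpSplit E ν μ`. Consequently both `m`-fold compositions are mixtures of the same branch
distributions, indexed by the transcripts `c : Fin m → Bool` of randomized response, and the two
weights of `c` differ by the factor `exp (ε * ∑ i, boolSign (c i))`. On transcripts with
`∑ i, boolSign (c i) ≤ √(2 m log(1/δ')) + m (E - 1)` this factor is at most `e^ε'`, and by
Hoeffding's inequality the other transcripts carry total weight at most `δ'` (the mean of
`boolSign` is `(E-1)/(E+1) ≤ E - 1`).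
-/

section Hoeffding

open Real

lemma Real.sinh_le_mul_cosh {x : ℝ} (hx : 0 ≤ x) : sinh x ≤ x * cosh x := by
  have hmono : MonotoneOn (fun t => t * cosh t - sinh t) (Set.Ici 0) := by
    refine monotoneOn_of_deriv_nonneg (convex_Ici 0) (by fun_prop) (by fun_prop) fun y hy => ?_
    have hderiv : HasDerivAt (fun t => t * cosh t - sinh t) (y * sinh y) y :=
      (((hasDerivAt_id' y).mul (hasDerivAt_cosh y)).sub (hasDerivAt_sinh y)).congr_deriv (by ring)
    rw [hderiv.deriv]
    have : 0 ≤ y := le_of_lt (by simpa using hy)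
    exact mul_nonneg this (sinh_nonneg_iff.mpr this)
  simpa using hmono Set.self_mem_Ici hx hx

/-- Hoeffding's lemma for a two-point distribution on `{1, -1}`. -/
lemma Real.mul_exp_add_mul_exp_neg_le {p q t : ℝ} (hqp : q ≤ p) (hpq : p + q = 1)
    (ht : 0 ≤ t) : p * exp t + q * exp (-t) ≤ exp ((p - q) * t + t ^ 2 / 2) :=
  calc p * exp t + q * exp (-t) = cosh t + (p - q) * sinh t := by
        rw [cosh_eq, sinh_eq]; linear_combination (exp t + exp (-t)) / 2 * hpq
    _ ≤ cosh t * (1 + (p - q) * t) := by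
        nlinarith [sinh_le_mul_cosh ht, cosh_pos t]
    _ ≤ exp (t ^ 2 / 2) * exp ((p - q) * t) := by
        refine mul_le_mul (cosh_le_exp_half_sq t) ?_ (by nlinarith) (exp_pos _).le
        linarith [add_one_le_exp ((p - q) * t)]
    _ = exp ((p - q) * t + t ^ 2 / 2) := by rw [← exp_add, add_comm]

lemma sum_prod_mul_exp_sum_eq_pow {β : Type*} [Fintype β] (m : ℕ) (r s : β → ℝ) (t : ℝ) :
    ∑ c : Fin m → β, (∏ i, r (c i)) * exp (t * ∑ i, s (c i))
      = (∑ b, r b * exp (t * s b)) ^ m := by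
  simp_rw [Finset.mul_sum, exp_sum, ← Finset.prod_mul_distrib]
  rw [← Fintype.prod_sum (fun (_ : Fin m) b => r b * exp (t * s b)), Finset.prod_const,
    Finset.card_univ, Fintype.card_fin]

lemma sum_filter_prod_le_exp_mul_pow {β : Type*} [Fintype β] (m : ℕ) {r : β → ℝ}
    (hr : ∀ b, 0 ≤ r b) (s : β → ℝ) {t : ℝ} (ht : 0 ≤ t) (T : ℝ) :
    ∑ c : Fin m → β with T < ∑ i, s (c i), ∏ i, r (c i)
      ≤ exp (-(t * T)) * (∑ b, r b * exp (t * s b)) ^ m := by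
  have hw : ∀ c : Fin m → β, 0 ≤ ∏ i, r (c i) := fun c => Finset.prod_nonneg fun i _ => hr _
  calc ∑ c : Fin m → β with T < ∑ i, s (c i), ∏ i, r (c i)
      ≤ ∑ c : Fin m → β with T < ∑ i, s (c i),
          (∏ i, r (c i)) * exp (t * ∑ i, s (c i) - t * T) := by
        refine Finset.sum_le_sum fun c hc => le_mul_of_one_le_right (hw c) (one_le_exp ?_)
        nlinarith [(Finset.mem_filter.mp hc).2]
    _ ≤ ∑ c : Fin m → β, (∏ i, r (c i)) * exp (t * ∑ i, s (c i) - t * T) :=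
        Finset.sum_le_sum_of_subset_of_nonneg (Finset.filter_subset _ _)
          fun c _ _ => mul_nonneg (hw c) (exp_pos _).le
    _ = exp (-(t * T)) * (∑ b, r b * exp (t * s b)) ^ m := by
        simp_rw [sub_eq_add_neg, exp_add, ← mul_assoc, ← Finset.sum_mul,
          sum_prod_mul_exp_sum_eq_pow, mul_comm]

def boolSign (b : Bool) : ℝ := bif b then -1 else 1

/-- Hoeffding's inequality for `m` independent signs, each equal to `1` with probability
`r false`. -/
lemma sum_filter_prod_le_exp_neg_sq {m : ℕ} (hm : 0 < m) {r : Bool → ℝ} (hr : 0 ≤ r true)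
    (hr' : r true ≤ r false) (hr1 : r false + r true = 1) {t T : ℝ} (ht : 0 ≤ t)
    (hT : m * (r false - r true) + t ≤ T) :
    ∑ c : Fin m → Bool with T < ∑ i, boolSign (c i), ∏ i, r (c i) ≤ exp (-(t ^ 2 / (2 * m))) := by
  have hm' : (0 : ℝ) < m := by exact_mod_cast hm
  have hu : 0 ≤ t / m := by positivity
  have hmgf : ∑ b, r b * exp (t / m * boolSign b)
      ≤ exp ((r false - r true) * (t / m) + (t / m) ^ 2 / 2) := by
    simpa [boolSign, add_comm (r true * _)] using mul_exp_add_mul_exp_neg_le hr' hr1 hu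
  calc _ ≤ exp (-(t / m * T)) * (∑ b, r b * exp (t / m * boolSign b)) ^ m :=
        sum_filter_prod_le_exp_mul_pow m (fun b => by cases b <;> linarith) _ hu T
    _ ≤ exp (-(t / m * T)) * exp ((r false - r true) * (t / m) + (t / m) ^ 2 / 2) ^ m := by
        gcongr
        exact Finset.sum_nonneg fun b _ =>
          mul_nonneg (by cases b <;> linarith) (exp_pos _).le
    _ ≤ exp (-(t ^ 2 / (2 * m))) := by
        rw [← exp_nat_mul, ← exp_add]
        gcongr
        field_simp
        nlinarith

end Hoeffding

section Split

variable {α : Type*} [MeasurableSpace α] {E : ℝ}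

noncomputable def dpSplit (E : ℝ) (μ ν : Measure α) : Measure α :=
  (ENNReal.ofReal (E - 1))⁻¹ • (ENNReal.ofReal E • μ - ν)

lemma dpSplit_apply {μ ν : Measure α} [IsFiniteMeasure ν] (h : ν ≤ ENNReal.ofReal E • μ)
    {S : Set α} (hS : MeasurableSet S) :
    dpSplit E μ ν S = (ENNReal.ofReal (E - 1))⁻¹ * (ENNReal.ofReal E * μ S - ν S) := by
  rw [dpSplit, Measure.smul_apply, Measure.sub_apply hS h, Measure.smul_apply, smul_eq_mul,
    smul_eq_mul]

lemma isProbabilityMeasure_dpSplit (hE : 1 < E) {μ ν : Measure α} [IsProbabilityMeasure μ]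
    [IsProbabilityMeasure ν] (h : ν ≤ ENNReal.ofReal E • μ) :
    IsProbabilityMeasure (dpSplit E μ ν) := by
  constructor
  have hsub : ENNReal.ofReal E - 1 = ENNReal.ofReal (E - 1) := by
    rw [ENNReal.ofReal_sub _ zero_le_one, ENNReal.ofReal_one]
  rw [dpSplit_apply h .univ, measure_univ, measure_univ, mul_one, hsub]
  exact ENNReal.inv_mul_cancel (by simp; linarith) ENNReal.ofReal_ne_top

lemma measurable_dpSplit {β : Type*} [MeasurableSpace β] {κ η : β → Measure α}
    (hκ : Measurable κ) (hη : Measurable η) [∀ b, IsFiniteMeasure (η b)]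
    (h : ∀ b, η b ≤ ENNReal.ofReal E • κ b) : Measurable fun b => dpSplit E (κ b) (η b) := by
  refine Measure.measurable_of_measurable_coe _ fun S hS => ?_
  simp_rw [dpSplit_apply (h _) hS]
  exact ((((Measure.measurable_coe hS).comp hκ).const_mul _).sub
    ((Measure.measurable_coe hS).comp hη)).const_mul _

lemma dpSplit_mix (hE : 1 < E) {μ ν : Measure α} [IsFiniteMeasure μ] [IsFiniteMeasure ν]
    (hμν : μ ≤ ENNReal.ofReal E • ν) (hνμ : ν ≤ ENNReal.ofReal E • μ) :
    ENNReal.ofReal (E / (E + 1)) • dpSplit E μ ν + ENNReal.ofReal (1 / (E + 1)) • dpSplit E ν μ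
      = μ := by
  ext S hS
  have hle : ∀ {ρ σ : Measure α}, ρ ≤ ENNReal.ofReal E • σ → ρ S ≤ ENNReal.ofReal E * σ S :=
    fun h => by simpa using h S
  simp only [Measure.add_apply, Measure.smul_apply, smul_eq_mul, dpSplit_apply hνμ hS,
    dpSplit_apply hμν hS]
  rw [← ENNReal.toReal_eq_toReal_iff' (by finiteness) (measure_ne_top μ S),
    ENNReal.toReal_add (by finiteness) (by finiteness)]
  simp only [ENNReal.toReal_mul, ENNReal.toReal_inv,
    ENNReal.toReal_sub_of_le (hle hνμ) (by finiteness),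
    ENNReal.toReal_sub_of_le (hle hμν) (by finiteness)]
  have hE0 : 0 ≤ E := by linarith
  simp only [ENNReal.toReal_ofReal hE0, ENNReal.toReal_ofReal (sub_nonneg.2 hE.le),
    ENNReal.toReal_ofReal (div_nonneg hE0 (by linarith : (0 : ℝ) ≤ E + 1)),
    ENNReal.toReal_ofReal (div_nonneg zero_le_one (by linarith : (0 : ℝ) ≤ E + 1))]
  have : E - 1 ≠ 0 := by linarith
  field_simp
  ring

end Split

section SeqCompose

variable {O : ℕ → Type} [∀ i, MeasurableSpace (O i)]

lemma measurable_snoc (k : ℕ) :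
    Measurable fun p : ((j : Fin k) → O j) × O k =>
      (Fin.snoc p.1 p.2 : (j : Fin (k + 1)) → O j) := by
  refine measurable_pi_lambda _ fun j => Fin.lastCases ?_ (fun i => ?_) j
  · simp only [Fin.snoc_last]
    exact measurable_snd
  · simp only [Fin.snoc_castSucc]
    exact (measurable_pi_apply i).comp measurable_fst

lemma measurable_map_snoc {k : ℕ} {κ : ((j : Fin k) → O j) → Measure (O k)} (hκ : Measurable κ)
    [∀ o, IsProbabilityMeasure (κ o)] :
    Measurable fun o => (κ o).map fun x => (Fin.snoc o x : (j : Fin (k + 1)) → O j) := by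
  refine Measure.measurable_of_measurable_coe _ fun S hS => ?_
  have hmap : ∀ o, (κ o).map (fun x => (Fin.snoc o x : (j : Fin (k + 1)) → O j)) S
      = κ o (Prod.mk o ⁻¹' ((fun p => Fin.snoc p.1 p.2) ⁻¹' S)) := fun o =>
    Measure.map_apply ((measurable_snoc k).comp measurable_prodMk_left) hS
  simp_rw [hmap]
  have : ProbabilityTheory.IsMarkovKernel ⟨κ, hκ⟩ := ⟨inferInstance⟩
  exact ProbabilityTheory.Kernel.measurable_kernel_prodMk_left (κ := ⟨κ, hκ⟩)
    (measurable_snoc k hS)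

noncomputable def seqComposeBranch {β : Type*}
    (γ : (i : ℕ) → β → ((j : Fin i) → O j) → Measure (O i)) :
    (k : ℕ) → (Fin k → β) → Measure ((j : Fin k) → O j)
  | 0, _ => Measure.dirac fun j => j.elim0
  | k + 1, c => (seqComposeBranch γ k (Fin.init c)).bind fun o =>
      (γ k (c (Fin.last k)) o).map fun x => Fin.snoc o x

variable {β : Type*} {γ : (i : ℕ) → β → ((j : Fin i) → O j) → Measure (O i)}

lemma isProbabilityMeasure_seqComposeBranch {k : ℕ}
    (hγ : ∀ i < k, ∀ b o, IsProbabilityMeasure (γ i b o)) (hγm : ∀ i < k, ∀ b, Measurable (γ i b))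
    (c : Fin k → β) : IsProbabilityMeasure (seqComposeBranch γ k c) := by
  induction k with
  | zero => exact Measure.dirac.isProbabilityMeasure
  | succ k ih =>
    have := ih (fun i hi => hγ i (by omega)) (fun i hi => hγm i (by omega)) (Fin.init c)
    have := hγ k k.lt_succ_self
    exact isProbabilityMeasure_bind (measurable_map_snoc (hγm k k.lt_succ_self _)).aemeasurable
      (.of_forall fun o => Measure.isProbabilityMeasure_map
        ((measurable_snoc k).comp measurable_prodMk_left).aemeasurable)

lemma seqComposeBranch_snoc_apply {k : ℕ} {b : β} (hγb : Measurable (γ k b))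
    [∀ o, IsProbabilityMeasure (γ k b o)] (c : Fin k → β) {S : Set ((j : Fin (k + 1)) → O j)}
    (hS : MeasurableSet S) :
    seqComposeBranch γ (k + 1) (Fin.snoc c b) S
      = ∫⁻ o, (γ k b o).map (fun x => Fin.snoc o x) S ∂seqComposeBranch γ k c := by
  rw [seqComposeBranch, Fin.init_snoc, Fin.snoc_last,
    Measure.bind_apply hS (measurable_map_snoc hγb).aemeasurable]

lemma seqCompose_eq_sum_smul_seqComposeBranch [Fintype β] {k : ℕ}
    (hγ : ∀ i < k, ∀ b o, IsProbabilityMeasure (γ i b o)) (hγm : ∀ i < k, ∀ b, Measurable (γ i b))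
    {κ : (i : ℕ) → ((j : Fin i) → O j) → Measure (O i)} (w : β → ℝ≥0∞)
    (hκ : ∀ i < k, ∀ o, κ i o = ∑ b, w b • γ i b o) :
    seqCompose O κ k = ∑ c : Fin k → β, (∏ i, w (c i)) • seqComposeBranch γ k c := by
  induction k with
  | zero => simp [seqCompose, seqComposeBranch, Finset.univ_unique]
  | succ k ih =>
    have := hγ k k.lt_succ_self
    set F : β → ((j : Fin k) → O j) → Measure ((j : Fin (k + 1)) → O j) :=
      fun b o => (γ k b o).map fun x => Fin.snoc o x
    have hF : ∀ b, Measurable (F b) := fun b => measurable_map_snoc (hγm k k.lt_succ_self b)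
    have hkernel : (fun o => (κ k o).map fun x => (Fin.snoc o x : (j : Fin (k + 1)) → O j))
        = fun o => ∑ b, w b • F b o := by
      funext o
      have hsnoc : Measurable fun x => (Fin.snoc o x : (j : Fin (k + 1)) → O j) :=
        (measurable_snoc k).comp measurable_prodMk_left
      rw [hκ k k.lt_succ_self, Measure.map_finset_sum' hsnoc.aemeasurable]
      simp only [Measure.map_smul, F]
    ext S hS
    rw [seqCompose, ih (fun i hi => hγ i (by omega)) (fun i hi => hγm i (by omega))
      (fun i hi => hκ i (by omega)), hkernel]
    have hFS : ∀ b, Measurable fun o => F b o S := fun b => (Measure.measurable_coe hS).comp (hF b)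
    have hmix : Measurable fun o => ∑ b, w b • F b o := by
      refine Measure.measurable_of_measurable_coe _ fun T hT => ?_
      simp only [Measure.finsetSum_apply, Measure.smul_apply, smul_eq_mul]
      exact Finset.measurable_sum _ fun b _ => ((Measure.measurable_coe hT).comp (hF b)).const_mul _
    have hbranch : ∀ c b, seqComposeBranch γ (k + 1) (Fin.snoc c b) S
        = ∫⁻ o, F b o S ∂seqComposeBranch γ k c := fun c b =>
      seqComposeBranch_snoc_apply (hγm k k.lt_succ_self b) c hS
    have hweight : ∀ (c : Fin k → β) b, ∏ i, w ((Fin.snoc c b : Fin (k + 1) → β) i)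
        = (∏ i, w (c i)) * w b := fun c b => by
      simp [Fin.prod_univ_castSucc]
    rw [Measure.bind_apply hS hmix.aemeasurable, lintegral_finsetSum_measure,
      Measure.finsetSum_apply, ← (Fin.snocEquiv fun _ => β).sum_comp, Fintype.sum_prod_type,
      Finset.sum_comm]
    refine Finset.sum_congr rfl fun c _ => ?_
    simp only [Measure.finsetSum_apply, Measure.smul_apply, smul_eq_mul, lintegral_smul_measure,
      Fin.snocEquiv_apply, hweight]
    rw [lintegral_finsetSum _ fun b _ => (hFS b).const_mul _, Finset.mul_sum]
    refine Finset.sum_congr rfl fun b _ => ?_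
    rw [lintegral_const_mul _ (hFS b), mul_assoc]
    exact congrArg _ (congrArg _ (hbranch c b).symm)

end SeqCompose

section RandomizedResponse

open Real

noncomputable def rrWeight (ε : ℝ) (b : Bool) : ℝ :=
  bif b then 1 / (exp ε + 1) else exp ε / (exp ε + 1)

lemma rrWeight_nonneg (ε : ℝ) (b : Bool) : 0 ≤ rrWeight ε b := by
  cases b <;> simp only [rrWeight, cond_true, cond_false] <;> positivity

lemma prod_rrWeight_eq_exp_mul {m : ℕ} (ε : ℝ) (c : Fin m → Bool) :
    ∏ i, rrWeight ε (c i) = exp (ε * ∑ i, boolSign (c i)) * ∏ i, rrWeight ε (!c i) := by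
  have hstep : ∀ b, rrWeight ε b = exp (ε * boolSign b) * rrWeight ε (!b) := fun b => by
    cases b <;> simp only [rrWeight, boolSign, cond_true, cond_false, Bool.not_true,
      Bool.not_false, mul_one, mul_neg, exp_neg] <;> field_simp
  rw [Finset.mul_sum, exp_sum, ← Finset.prod_mul_distrib]
  exact Finset.prod_congr rfl fun i _ => hstep (c i)

lemma sum_filter_prod_rrWeight_le {m : ℕ} (hm : 0 < m) {ε : ℝ} (hε : 0 ≤ ε) {δ : ℝ}
    (hδ : 0 < δ) :
    ∑ c : Fin m → Bool with √(2 * m * log (1 / δ)) + m * (exp ε - 1) < ∑ i, boolSign (c i),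
      ∏ i, rrWeight ε (c i) ≤ δ := by
  have hE : 1 ≤ exp ε := one_le_exp hε
  have hm' : (0 : ℝ) < m := by exact_mod_cast hm
  have hmean : rrWeight ε false - rrWeight ε true ≤ exp ε - 1 := by
    simp only [rrWeight, cond_true, cond_false]
    rw [← sub_div, div_le_iff₀ (by positivity)]
    nlinarith
  refine (sum_filter_prod_le_exp_neg_sq hm (rrWeight_nonneg ε true) ?_ ?_
    (sqrt_nonneg (2 * m * log (1 / δ))) ?_).trans ?_
  · simp only [rrWeight, cond_true, cond_false]
    gcongr
  · simp only [rrWeight, cond_true, cond_false]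
    field_simp
  · linarith [mul_le_mul_of_nonneg_left hmean hm'.le]
  · calc exp (-(√(2 * m * log (1 / δ)) ^ 2 / (2 * m))) ≤ exp (-log (1 / δ)) := by
          rw [sq_sqrt', exp_le_exp, neg_le_neg_iff, le_div_iff₀ (by positivity)]
          exact le_trans (by ring_nf; rfl) (le_max_left _ _)
      _ = δ := by rw [exp_neg, exp_log (by positivity), one_div, inv_inv]

end RandomizedResponse

lemma finsetSum_smul_apply_le {ι α : Type*} [Fintype ι] [MeasurableSpace α] {ν : ι → Measure α}
    [∀ c, IsProbabilityMeasure (ν c)] {W W' : ι → ℝ≥0∞} {K δ : ℝ≥0∞} (good : ι → Prop)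
    [DecidablePred good] (hgood : ∀ c, good c → W c ≤ K * W' c)
    (hbad : ∑ c with ¬good c, W c ≤ δ) (S : Set α) :
    (∑ c, W c • ν c) S ≤ K * (∑ c, W' c • ν c) S + δ := by
  simp only [Measure.finsetSum_apply, Measure.smul_apply, smul_eq_mul]
  rw [← Finset.sum_filter_add_sum_filter_not _ good]
  gcongr
  · calc ∑ c with good c, W c * ν c S ≤ ∑ c with good c, K * (W' c * ν c S) :=
          Finset.sum_le_sum fun c hc => by
            rw [← mul_assoc]; gcongr; exact hgood c (Finset.mem_filter.mp hc).2
      _ ≤ K * ∑ c, W' c * ν c S := by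
          rw [← Finset.mul_sum]; gcongr; exact Finset.filter_subset _ _
  · exact (Finset.sum_le_sum fun c _ => mul_le_of_le_one_right' prob_le_one).trans hbad

lemma IsDP.le_smul {Ω : Type} {α : Type*} [MeasurableSpace α] {N : Ω → Ω → Prop}
    {M : Ω → Measure α} {ε : ℝ} (h : IsDP N M ε 0) {X X' : Ω} (hN : N X X') :
    M X ≤ ENNReal.ofReal (Real.exp ε) • M X' :=
  Measure.le_iff.2 fun S hS => by simpa using h X X' hN S hS

lemma sum_rrWeight_smul_apply_le {m : ℕ} (hm : 0 < m) {ε δ : ℝ} (hε : 0 < ε) (hδ : 0 < δ)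
    {α : Type*} [MeasurableSpace α] {ν : (Fin m → Bool) → Measure α}
    [∀ c, IsProbabilityMeasure (ν c)] (S : Set α) :
    (∑ c, (∏ i, ENNReal.ofReal (rrWeight ε (c i))) • ν c) S
      ≤ ENNReal.ofReal (Real.exp (√(2 * m * Real.log (1 / δ)) * ε + m * ε * (Real.exp ε - 1)))
          * (∑ c, (∏ i, ENNReal.ofReal (rrWeight ε (!c i))) • ν c) S + ENNReal.ofReal δ := by
  have hprod : ∀ f : Fin m → Bool,
      ∏ i, ENNReal.ofReal (rrWeight ε (f i)) = ENNReal.ofReal (∏ i, rrWeight ε (f i)) :=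
    fun f => (ENNReal.ofReal_prod_of_nonneg fun i _ => rrWeight_nonneg ε (f i)).symm
  refine finsetSum_smul_apply_le
    (fun c => ∑ i, boolSign (c i) ≤ √(2 * m * Real.log (1 / δ)) + m * (Real.exp ε - 1))
    (fun c hc => ?_) ?_ S
  · rw [hprod, hprod, ← ENNReal.ofReal_mul (Real.exp_pos _).le, prod_rrWeight_eq_exp_mul]
    refine ENNReal.ofReal_le_ofReal (mul_le_mul_of_nonneg_right (Real.exp_le_exp.2 ?_)
      (Finset.prod_nonneg fun i _ => rrWeight_nonneg ε _))
    nlinarith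
  · simp only [not_le, hprod]
    rw [← ENNReal.ofReal_sum_of_nonneg fun c _ => Finset.prod_nonneg fun i _ =>
      rrWeight_nonneg ε _]
    exact ENNReal.ofReal_le_ofReal (sum_filter_prod_rrWeight_le hm hε.le hδ)

lemma exists_seqCompose_eq_sum_rrWeight_smul {O : ℕ → Type} [∀ i, MeasurableSpace (O i)]
    {m : ℕ} {ε : ℝ} (hε : 0 < ε) {κ κ' : (i : ℕ) → ((j : Fin i) → O j) → Measure (O i)}
    (hκ : ∀ i < m, ∀ o, IsProbabilityMeasure (κ i o))
    (hκ' : ∀ i < m, ∀ o, IsProbabilityMeasure (κ' i o))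
    (hκm : ∀ i < m, Measurable (κ i)) (hκm' : ∀ i < m, Measurable (κ' i))
    (hle : ∀ i < m, ∀ o, κ i o ≤ ENNReal.ofReal (Real.exp ε) • κ' i o)
    (hle' : ∀ i < m, ∀ o, κ' i o ≤ ENNReal.ofReal (Real.exp ε) • κ i o) :
    ∃ ν : (Fin m → Bool) → Measure ((j : Fin m) → O j), (∀ c, IsProbabilityMeasure (ν c)) ∧
      seqCompose O κ m = ∑ c, (∏ i, ENNReal.ofReal (rrWeight ε (c i))) • ν c ∧
      seqCompose O κ' m = ∑ c, (∏ i, ENNReal.ofReal (rrWeight ε (!c i))) • ν c := by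
  have hE : 1 < Real.exp ε := Real.one_lt_exp_iff.mpr hε
  let γ : (i : ℕ) → Bool → ((j : Fin i) → O j) → Measure (O i) := fun i b o =>
    bif b then dpSplit (Real.exp ε) (κ' i o) (κ i o) else dpSplit (Real.exp ε) (κ i o) (κ' i o)
  have hγ : ∀ i < m, ∀ b o, IsProbabilityMeasure (γ i b o) := fun i hi b o => by
    have := hκ i hi o; have := hκ' i hi o
    cases b
    · exact isProbabilityMeasure_dpSplit hE (hle' i hi o)
    · exact isProbabilityMeasure_dpSplit hE (hle i hi o)
  have hγm : ∀ i < m, ∀ b, Measurable (γ i b) := fun i hi b => by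
    have := hκ i hi; have := hκ' i hi
    cases b
    · exact measurable_dpSplit (hκm i hi) (hκm' i hi) (hle' i hi)
    · exact measurable_dpSplit (hκm' i hi) (hκm i hi) (hle i hi)
  have hmix : ∀ i < m, ∀ o, κ i o = ∑ b, ENNReal.ofReal (rrWeight ε b) • γ i b o ∧
      κ' i o = ∑ b, ENNReal.ofReal (rrWeight ε (!b)) • γ i b o := fun i hi o => by
    have := hκ i hi o; have := hκ' i hi o
    simp only [Fintype.sum_bool, Bool.not_true, Bool.not_false]
    exact ⟨(dpSplit_mix hE (hle i hi o) (hle' i hi o)).symm.trans (add_comm _ _),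
      (dpSplit_mix hE (hle' i hi o) (hle i hi o)).symm⟩
  exact ⟨seqComposeBranch γ m, isProbabilityMeasure_seqComposeBranch hγ hγm,
    seqCompose_eq_sum_smul_seqComposeBranch hγ hγm _ fun i hi o => (hmix i hi o).1,
    seqCompose_eq_sum_smul_seqComposeBranch hγ hγm _ fun i hi o => (hmix i hi o).2⟩

/-- Advanced composition (Dwork–Rothblum–Vadhan): the sequential (adaptive) composition of
`m` mechanisms, each of which is `ε`-DP for every fixed tuple of previous outcomes, is
`(ε', δ')`-DP for every `δ' > 0`, where `ε' = √(2·m·log(1/δ'))·ε + m·ε·(e^ε − 1)`. -/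
theorem advanced_composition (Ω : Type) (N : Ω → Ω → Prop) (hsym : ∀ X X', N X X' → N X' X)
    (m : ℕ) (hm : 1 ≤ m) (ε : ℝ) (hε : 0 < ε) (O : ℕ → Type) [∀ i, MeasurableSpace (O i)]
    (M : (i : ℕ) → Ω → ((j : Fin i) → O j) → Measure (O i))
    (hprob : ∀ i, i < m → ∀ X o, IsProbabilityMeasure (M i X o))
    (hmeas : ∀ i, i < m → ∀ X, Measurable fun o => M i X o)
    (hDP : ∀ i, i < m → ∀ o, IsDP N (fun X => M i X o) ε 0) :
    ∀ δ' : ℝ, 0 < δ' →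
      IsDP N (fun X => seqCompose O (fun i o => M i X o) m)
        (Real.sqrt (2 * m * Real.log (1 / δ')) * ε + m * ε * (Real.exp ε - 1)) δ' := by
  intro δ' hδ' X X' hN S _
  obtain ⟨ν, hν, hX, hX'⟩ := exists_seqCompose_eq_sum_rrWeight_smul hε
    (fun i hi => hprob i hi X) (fun i hi => hprob i hi X') (fun i hi => hmeas i hi X)
    (fun i hi => hmeas i hi X') (fun i hi o => (hDP i hi o).le_smul hN)
    (fun i hi o => (hDP i hi o).le_smul (hsym X X' hN))
  dsimp only
  rw [hX, hX']
  exact sum_rrWeight_smul_apply_le hm hε hδ' S
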